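/- arXiv:2007.13189 — 4 statements merged into one kernel-verified Lean document; each statement's English description precedes it below -/
import Mathlib

section
/- Let n be a positive integer with distinct prime factors p_1,...,p_s, and let ζ be a primitive n-th root of unity. For an integer m, the sum of ζ^{m·c} over all c in [1,n] coprime to n (i.e., the Ramanujan sum c_n(m)) equals 0 if (n/rad(n)) ∤ m, and equals (-1)^{s - ω(d)} · (n/rad(n)) · φ(rad(d)) if (n/rad(n)) | m, where d = gcd(m/(n/rad(n)), n). -/
/-
Möbius inversion of the condition `gcd(c, n) = 1` writes `c_n(m)` as `∑_{d ∣ n} μ(d) S_d`, where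
`S_d` is the sum of `ζ^{mc}` over the multiples `c` of `d` in `[1, n]`: a full sum over the
`(n/d)`-th roots of unity `(ζ^{dm})^k`, hence `n/d` or `0` according as `n/d ∣ m` (Kluyver's
formula). Only squarefree `d`, i.e. the divisors of `t = rad n`, contribute, and for them
`n/d = s · t/d` with `s = n/rad n`; so `c_n(m) = 0` unless `s ∣ m`, and then `c_n(m) = s c_t(m/s)`.
For squarefree `t`, `c_t(a) = ∑_{e ∣ r} μ(t/e) e` with `r = gcd(a, t) = rad(gcd(a, n))`, and
`μ(t/e) = μ(t/r) μ(r/e)` turns this into `μ(t/r) φ(r) = (-1)^{ω(n) - ω(r)} φ(r)`.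
-/

open Finset

def radical (n : ℕ) : ℕ := ∏ p ∈ n.primeFactors, p

theorem radical_eq_uniqueFactorizationMonoid_radical (n : ℕ) :
    radical n = UniqueFactorizationMonoid.radical n :=
  Nat.radical_eq_prod_primeFactors.symm

theorem radical_ne_zero (n : ℕ) : radical n ≠ 0 := by
  rw [radical_eq_uniqueFactorizationMonoid_radical]
  exact UniqueFactorizationMonoid.radical_ne_zero

theorem radical_dvd_self (n : ℕ) : radical n ∣ n := by
  rw [radical_eq_uniqueFactorizationMonoid_radical]
  exact UniqueFactorizationMonoid.radical_dvd_self

theorem squarefree_radical (n : ℕ) : Squarefree (radical n) := by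
  rw [radical_eq_uniqueFactorizationMonoid_radical]
  exact UniqueFactorizationMonoid.squarefree_radical

theorem primeFactors_radical (n : ℕ) : (radical n).primeFactors = n.primeFactors := by
  rw [radical_eq_uniqueFactorizationMonoid_radical]
  exact Nat.primeFactors_radical n

theorem Squarefree.dvd_radical {d n : ℕ} (hd : Squarefree d) (hdn : d ∣ n) (hn : n ≠ 0) :
    d ∣ radical n := by
  rw [radical_eq_uniqueFactorizationMonoid_radical,
    UniqueFactorizationMonoid.dvd_radical_iff hd.isRadical hn]
  exact hdn

theorem Nat.Prime.dvd_radical_iff {p n : ℕ} (hp : p.Prime) (hn : n ≠ 0) :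
    p ∣ radical n ↔ p ∣ n := by
  rw [radical_eq_uniqueFactorizationMonoid_radical]
  exact UniqueFactorizationMonoid.dvd_radical_iff_of_irreducible hp.prime.irreducible hn

theorem Nat.gcd_radical (k : ℕ) {n : ℕ} (hn : n ≠ 0) :
    Nat.gcd k (radical n) = radical (Nat.gcd k n) := by
  have hgcd : Nat.gcd k n ≠ 0 := Nat.gcd_ne_zero_right hn
  refine (Nat.Squarefree.ext_iff ((squarefree_radical n).squarefree_of_dvd (Nat.gcd_dvd_right _ _))
    (squarefree_radical _)).mpr fun p hp => ?_
  rw [Nat.dvd_gcd_iff, hp.dvd_radical_iff hn, hp.dvd_radical_iff hgcd, Nat.dvd_gcd_iff]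

open ArithmeticFunction
open scoped ArithmeticFunction.Moebius

theorem sum_divisors_moebius (k : ℕ) : ∑ d ∈ k.divisors, μ d = if k = 1 then 1 else 0 := by
  simpa only [coe_mul_zeta_apply, one_apply] using congr($moebius_mul_coe_zeta k)

theorem sum_divisors_moebius_div_mul (r : ℕ) :
    ∑ e ∈ r.divisors, μ (r / e) * (e : ℤ) = Nat.totient r := by
  rcases r.eq_zero_or_pos with rfl | hr
  · simp
  have hinv := (sum_eq_iff_sum_mul_moebius_eq (f := fun k => (Nat.totient k : ℤ))
      (g := fun k => (k : ℤ))).mp (fun k _ => by exact_mod_cast Nat.sum_totient k) r hr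
  rw [← hinv, ← Nat.sum_divisorsAntidiagonal' (f := fun a b => (μ a : ℤ) * b)]
  exact sum_congr rfl fun x _ => by push_cast; ring

theorem moebius_div_of_squarefree {t r : ℕ} (ht : Squarefree t) (hrt : r ∣ t) :
    μ (t / r) = (-1) ^ (#t.primeFactors - #r.primeFactors) := by
  have hu : Squarefree (t / r) := ht.squarefree_of_dvd (Nat.div_dvd_of_dvd hrt)
  have hr : r ≠ 0 := ne_zero_of_dvd_ne_zero ht.ne_zero hrt
  rw [moebius_apply_of_squarefree hu,
    ← (cardDistinctFactors_eq_cardFactors_iff_squarefree hu.ne_zero).mpr hu,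
    cardDistinctFactors_apply, ← List.card_toFinset, ← Nat.primeFactors.eq_1,
    ← Nat.gcd_eq_right hrt, Nat.primeFactors_div_gcd ht hr, Nat.gcd_eq_right hrt,
    card_sdiff_of_subset (Nat.primeFactors_mono hrt ht.ne_zero)]

theorem moebius_div_eq_mul_of_squarefree {t r e : ℕ} (ht : Squarefree t) (hrt : r ∣ t)
    (her : e ∣ r) : μ (t / e) = μ (t / r) * μ (r / e) := by
  have hsplit : t / e = t / r * (r / e) := (Nat.div_mul_div hrt her).symm
  have hsq : Squarefree (t / e) := ht.squarefree_of_dvd (Nat.div_dvd_of_dvd (her.trans hrt))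
  rw [hsplit] at hsq ⊢
  exact isMultiplicative_moebius.map_mul_of_coprime (Nat.coprime_of_squarefree_mul hsq)

theorem sum_divisors_moebius_div_mul_of_squarefree {t r : ℕ} (ht : Squarefree t) (hrt : r ∣ t) :
    ∑ e ∈ r.divisors, μ (t / e) * (e : ℤ) = μ (t / r) * Nat.totient r := by
  rw [← sum_divisors_moebius_div_mul, mul_sum]
  refine sum_congr rfl fun e he => ?_
  rw [moebius_div_eq_mul_of_squarefree ht hrt (Nat.dvd_of_mem_divisors he), mul_assoc]

theorem sum_divisors_moebius_smul_eq_sum_divisors_radical {M : Type*} [AddCommGroup M] {n : ℕ}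
    (hn : n ≠ 0) (f : ℕ → M) :
    ∑ d ∈ n.divisors, μ d • f d = ∑ d ∈ (radical n).divisors, μ d • f d := by
  refine (sum_subset (Nat.divisors_subset_of_dvd hn (radical_dvd_self n)) fun d hd hdr => ?_).symm
  have hsq : ¬ Squarefree d := fun hsq => hdr <| Nat.mem_divisors.mpr
    ⟨hsq.dvd_radical (Nat.dvd_of_mem_divisors hd) hn, radical_ne_zero n⟩
  rw [moebius_eq_zero_of_not_squarefree hsq, zero_smul]

/-- The Ramanujan sum `c_n(m)`, through Kluyver's formula `∑_{d ∣ n} μ(d) [n/d ∣ m] n/d`. -/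
def ramanujanSum (n : ℕ) (m : ℤ) : ℤ :=
  ∑ d ∈ n.divisors, μ d * if ((n / d : ℕ) : ℤ) ∣ m then ((n / d : ℕ) : ℤ) else 0

theorem ramanujanSum_eq_ite_radical {n : ℕ} (hn : n ≠ 0) (m : ℤ) :
    ramanujanSum n m =
      if ((n / radical n : ℕ) : ℤ) ∣ m then
        (n / radical n : ℕ) * ramanujanSum (radical n) (m / (n / radical n : ℕ))
      else 0 := by
  set t := radical n
  set s := n / t
  have hdiv (d : ℕ) (hd : d ∈ t.divisors) : n / d = s * (t / d) := by
    rw [← Nat.mul_div_assoc _ (Nat.dvd_of_mem_divisors hd), Nat.div_mul_cancel (radical_dvd_self n)]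
  have hsupport := sum_divisors_moebius_smul_eq_sum_divisors_radical hn
    (fun d => if ((n / d : ℕ) : ℤ) ∣ m then ((n / d : ℕ) : ℤ) else 0)
  simp only [smul_eq_mul] at hsupport
  rw [ramanujanSum, hsupport]
  split_ifs with hsm
  · obtain ⟨m', rfl⟩ := hsm
    have hs : (s : ℤ) ≠ 0 := Nat.cast_ne_zero.mpr
      ((Nat.div_ne_zero_iff_of_dvd (radical_dvd_self n)).mpr ⟨hn, radical_ne_zero n⟩)
    rw [Int.mul_ediv_cancel_left _ hs, ramanujanSum, mul_sum]
    refine sum_congr rfl fun d hd => ?_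
    simp only [hdiv d hd, Nat.cast_mul, mul_dvd_mul_iff_left hs]
    split_ifs <;> ring
  · refine sum_eq_zero fun d hd => ?_
    rw [hdiv d hd, if_neg fun h => hsm (dvd_trans (by push_cast; exact dvd_mul_right _ _) h),
      mul_zero]

theorem ramanujanSum_eq_sum_divisors_gcd {n : ℕ} (hn : n ≠ 0) (m : ℤ) :
    ramanujanSum n m = ∑ e ∈ (Int.gcd m n).divisors, μ (n / e) * (e : ℤ) := by
  have hgcd : {e ∈ n.divisors | ((e : ℕ) : ℤ) ∣ m} = (Int.gcd m n).divisors := by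
    rw [Int.gcd_eq_natAbs, Int.natAbs_natCast,
      ← Nat.divisors_filter_dvd_of_dvd hn (Nat.gcd_dvd_right m.natAbs n)]
    refine filter_congr fun e he => ?_
    rw [Nat.dvd_gcd_iff, Int.natCast_dvd,
      and_iff_left (Nat.dvd_of_mem_divisors he)]
  rw [← hgcd, sum_filter, ramanujanSum,
    ← Nat.sum_div_divisors n (fun e => if (e : ℤ) ∣ m then μ (n / e) * (e : ℤ) else 0)]
  refine sum_congr rfl fun d hd => ?_
  rw [Nat.div_div_self (Nat.dvd_of_mem_divisors hd) hn, mul_ite, mul_zero]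

theorem sum_filter_coprime_eq_sum_divisors_moebius {M : Type*} [AddCommGroup M] {n : ℕ}
    (hn : n ≠ 0) (s : Finset ℕ) (f : ℕ → M) :
    ∑ c ∈ s with c.Coprime n, f c = ∑ d ∈ n.divisors, μ d • ∑ c ∈ s with d ∣ c, f c := by
  have hindicator (c : ℕ) :
      (if c.Coprime n then f c else 0) = ∑ d ∈ n.divisors with d ∣ c, μ d • f c := by
    have hdiv : {d ∈ n.divisors | d ∣ c} = (c.gcd n).divisors := by
      rw [← Nat.divisors_filter_dvd_of_dvd hn (Nat.gcd_dvd_right c n)]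
      exact filter_congr fun d hd => by
        rw [Nat.dvd_gcd_iff, and_iff_left (Nat.dvd_of_mem_divisors hd)]
    rw [← sum_smul, hdiv, sum_divisors_moebius]
    split_ifs <;> simp_all [Nat.coprime_iff_gcd_eq_one]
  calc ∑ c ∈ s with c.Coprime n, f c
      = ∑ c ∈ s, ∑ d ∈ n.divisors with d ∣ c, μ d • f c := by
        rw [sum_filter]; exact sum_congr rfl fun c _ => hindicator c
    _ = ∑ d ∈ n.divisors, ∑ c ∈ s with d ∣ c, μ d • f c :=
        sum_comm' fun _ _ => by simp only [mem_filter]; tauto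
    _ = ∑ d ∈ n.divisors, μ d • ∑ c ∈ s with d ∣ c, f c := by simp_rw [smul_sum]

theorem sum_Icc_filter_dvd {M : Type*} [AddCommMonoid M] {d : ℕ} (hd : 0 < d) (n : ℕ)
    (f : ℕ → M) : ∑ c ∈ Icc 1 n with d ∣ c, f c = ∑ k ∈ Icc 1 (n / d), f (d * k) := by
  refine sum_nbij' (· / d) (d * ·) ?_ ?_ ?_ ?_ ?_
  · intro c hc
    simp only [mem_filter, mem_Icc] at hc ⊢
    obtain ⟨⟨hc1, hcn⟩, k, rfl⟩ := hc
    rw [Nat.mul_div_cancel_left k hd, Nat.le_div_iff_mul_le hd, mul_comm]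
    exact ⟨Nat.pos_of_ne_zero (by rintro rfl; simp at hc1), hcn⟩
  · intro k hk
    simp only [mem_filter, mem_Icc] at hk ⊢
    rw [Nat.le_div_iff_mul_le hd, mul_comm] at hk
    exact ⟨⟨Nat.mul_pos hd hk.1, hk.2⟩, dvd_mul_right d k⟩
  · intro c hc
    simp only [mem_filter, mem_Icc] at hc
    exact Nat.mul_div_cancel' hc.2
  · intro k _
    exact Nat.mul_div_cancel_left k hd
  · intro c hc
    simp only [mem_filter, mem_Icc] at hc
    rw [Nat.mul_div_cancel' hc.2]

theorem geom_sum_Icc_eq_zero {K : Type*} [Field K] {w : K} {N : ℕ} (hw : w ^ N = 1)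
    (hw1 : w ≠ 1) : ∑ k ∈ Icc 1 N, w ^ k = 0 := by
  rw [← Finset.Ico_add_one_right_eq_Icc, sum_Ico_eq_sum_range, add_tsub_cancel_right]
  simp_rw [add_comm 1, pow_succ, ← sum_mul, geom_sum_eq hw1, hw, sub_self, zero_div, zero_mul]

theorem IsPrimitiveRoot.sum_Icc_zpow_mul {K : Type*} [Field K] {η : K} {N : ℕ}
    (hη : IsPrimitiveRoot η N) (m : ℤ) :
    ∑ k ∈ Icc 1 N, η ^ (m * k) = if (N : ℤ) ∣ m then (N : K) else 0 := by
  simp_rw [zpow_mul, zpow_natCast]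
  split_ifs with hm
  · simp [(hη.zpow_eq_one_iff_dvd m).mpr hm]
  · refine geom_sum_Icc_eq_zero ?_ (mt (hη.zpow_eq_one_iff_dvd m).mp hm)
    rw [← zpow_natCast, ← zpow_mul, mul_comm, zpow_mul, zpow_natCast, hη.pow_eq_one, one_zpow]

theorem IsPrimitiveRoot.sum_Icc_filter_dvd_zpow_mul {K : Type*} [Field K] {ζ : K} {n d : ℕ}
    (hζ : IsPrimitiveRoot ζ n) (hd : d ∈ n.divisors) (m : ℤ) :
    ∑ c ∈ Icc 1 n with d ∣ c, ζ ^ (m * c) =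
      if ((n / d : ℕ) : ℤ) ∣ m then ((n / d : ℕ) : K) else 0 := by
  rw [sum_Icc_filter_dvd (Nat.pos_of_mem_divisors hd),
    ← (hζ.pow_of_dvd (Nat.pos_of_mem_divisors hd).ne' (Nat.dvd_of_mem_divisors hd)).sum_Icc_zpow_mul]
  refine sum_congr rfl fun k _ => ?_
  rw [← zpow_natCast ζ d, ← zpow_mul]
  push_cast
  ring_nf

theorem IsPrimitiveRoot.sum_filter_coprime_zpow_mul {K : Type*} [Field K] {ζ : K} {n : ℕ}
    (hζ : IsPrimitiveRoot ζ n) (hn : n ≠ 0) (m : ℤ) :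
    ∑ c ∈ Icc 1 n with c.Coprime n, ζ ^ (m * c) = ramanujanSum n m := by
  rw [sum_filter_coprime_eq_sum_divisors_moebius hn, ramanujanSum, Int.cast_sum]
  refine sum_congr rfl fun d hd => ?_
  rw [hζ.sum_Icc_filter_dvd_zpow_mul hd, zsmul_eq_mul, Int.cast_mul, apply_ite Int.cast,
    Int.cast_natCast, Int.cast_zero]

/-- Closed form for the Ramanujan sum `c_n(m) = Σ_{gcd(c,n)=1, 1≤c≤n} ζ^(mc)`:
it is `0` if `(n/rad n) ∤ m`, and `(-1)^(ω(n)-ω(d)) · (n/rad n) · φ(rad d)`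
if `(n/rad n) ∣ m`, where `d = gcd(m/(n/rad n), n)`. -/
theorem ramanujan_sum_closed_form (n : ℕ) (hn : 0 < n) (ζ : ℂ)
    (hζ : IsPrimitiveRoot ζ n) (m : ℤ) :
    ∑ c ∈ (Icc 1 n).filter (fun c => Nat.Coprime c n), ζ ^ (m * (c : ℤ)) =
      if ((n / radical n : ℕ) : ℤ) ∣ m then
        (-1 : ℂ) ^ (n.primeFactors.card -
            (Int.gcd (m / ((n / radical n : ℕ) : ℤ)) n).primeFactors.card) *
          ((n / radical n : ℕ) : ℂ) *
          (Nat.totient (radical (Int.gcd (m / ((n / radical n : ℕ) : ℤ)) n)) : ℂ)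
      else 0 := by
  rw [hζ.sum_filter_coprime_zpow_mul hn.ne' m, ramanujanSum_eq_ite_radical hn.ne']
  set s := n / radical n
  split_ifs
  · set d := Int.gcd (m / s) n
    have hrad : Int.gcd (m / s) (radical n) = radical d := by
      simp only [d, Int.gcd_eq_natAbs, Int.natAbs_natCast]
      exact Nat.gcd_radical _ hn.ne'
    have hdvd : radical d ∣ radical n := by
      rw [← hrad]
      exact Nat.gcd_dvd_right _ _
    rw [ramanujanSum_eq_sum_divisors_gcd (radical_ne_zero n), hrad,
      sum_divisors_moebius_div_mul_of_squarefree (squarefree_radical n) hdvd,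
      moebius_div_of_squarefree (squarefree_radical n) hdvd, primeFactors_radical,
      primeFactors_radical]
    simp only [Int.cast_mul, Int.cast_pow, Int.cast_neg, Int.cast_one, Int.cast_natCast]
    ring
  · exact Int.cast_zero
end

section
/- For n ≥ 1 and a prime p with p | n, the spectral distortion satisfies SD(Φ_{np}) = SD(Φ_n), where SD(f) = |det M_f|^{1/deg f} / σ_min(M_f). Consequently SD(Φ_n) = SD(Φ_{rad(n)}) for all n. -/
open Finset Matrix

/-- The Vandermonde matrix of the `n`-th cyclotomic polynomial. -/
noncomputable def cycVdm (n : ℕ) : Matrix (Fin n.totient) (Fin n.totient) ℂ :=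
  fun i t => Complex.exp (2 * Real.pi * Complex.I *
      ((({a ∈ Finset.range n | n.Coprime a}).orderIsoOfFin rfl t : ℕ) : ℂ) / (n : ℂ))
    ^ (i : ℕ)

/-- The smallest singular value of a square complex matrix. -/
noncomputable def sigmaMin {n : ℕ} (A : Matrix (Fin n) (Fin n) ℂ) : ℝ :=
  Real.sqrt (⨅ i, (Matrix.isHermitian_conjTranspose_mul_self A).eigenvalues i)

/-- The spectral distortion `SD(Φ_n) = |det M_{Φ_n}|^{1/φ(n)} / σ_min(M_{Φ_n})`. -/
noncomputable def SD (n : ℕ) : ℝ :=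
  ‖(cycVdm n).det‖ ^ ((1 : ℝ) / (n.totient : ℝ)) / sigmaMin (cycVdm n)

/-!
Index the rows of `M_{Φ_{np}}` by `r + p m` (`r < p`, `m < φ(n)`) and, since `p ∣ n`, its
columns by the residues `a + n q` with `a` coprime to `n` and `q < p`. With `ω = exp(2πi/(np))`
and `ξ = ω^n`, the entry `ω^((a + nq)(r + pm))` equals `(ω^a ξ^q)^r · (ω^p)^(am)`, so after
reindexing `M_{Φ_{np}} = (I_p ⊗ M_{Φ_n}) X`, where `X` is block diagonal with the twisted DFT
blocks `V_a = ((ω^a ξ^q)^r)_{r,q}`, and `V_a* V_a = p I`. Hence the Gram matrix of `M_{Φ_{np}}`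
is similar to `p (I_p ⊗ M_{Φ_n}* M_{Φ_n})`: `det(z - G_{np}) = p^{φ(np)} det(z/p - G_n)^p`.
So the Gram eigenvalues scale by `p` and `|det M|^{1/deg}` by `√p`, and `√p` cancels in `SD`.
Removing repeated prime factors one at a time gives `SD(Φ_m) = SD(Φ_{rad m})`.
-/

open Pointwise

namespace Matrix

variable {ι κ o K 𝕜 : Type*} [Fintype ι] [DecidableEq ι]

theorem eval_charpoly_mul_mul_of_mul_eq_smul_one [Field K] {Y X B : Matrix ι ι K} {c : K}
    (hc : c ≠ 0) (hYX : Y * X = c • 1) (z : K) :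
    (Y * B * X).charpoly.eval z = c ^ Fintype.card ι * B.charpoly.eval (z / c) := by
  have hconj : scalar ι z - Y * B * X = Y * (scalar ι (z / c) - B) * X := by
    simp only [scalar_apply, ← smul_one_eq_diagonal]
    rw [mul_sub, sub_mul, Matrix.mul_smul, Matrix.smul_mul, mul_one, hYX, smul_smul,
      div_mul_cancel₀ z hc]
  rw [eval_charpoly, eval_charpoly, hconj, det_mul, det_mul, mul_right_comm, ← det_mul, hYX,
    det_smul, det_one, mul_one, mul_comm]

theorem charpoly_blockDiagonal [CommRing K] [Fintype o] [DecidableEq o] (M : o → Matrix ι ι K) :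
    (blockDiagonal M).charpoly = ∏ k, (M k).charpoly := by
  simp only [charpoly, ← det_blockDiagonal]
  congr 1
  ext ⟨i, k⟩ ⟨j, k'⟩
  by_cases hk : k = k'
  · subst hk
    by_cases hij : i = j <;> simp [blockDiagonal_apply, hij]
  · simp [blockDiagonal_apply, hk]

theorem blockDiagonal_const_mul_submatrix_blockDiagonal_apply {m n o o' α : Type*}
    [Fintype n] [Fintype o] [DecidableEq n] [DecidableEq o] [NonUnitalNonAssocSemiring α]
    (M : Matrix m n α) (V : n → Matrix o o' α) (i : m) (r : o) (q : o') (s : n) :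
    (blockDiagonal (fun _ : o => M) * (blockDiagonal V).submatrix Prod.swap Prod.swap)
      (i, r) (s, q) = M i s * V s r q := by
  simp [mul_apply, blockDiagonal_apply, Fintype.sum_prod_type]

section Hermitian

variable [Fintype κ] [DecidableEq κ] [RCLike 𝕜]

theorem IsHermitian.mem_range_eigenvalues_iff_isRoot_charpoly {A : Matrix ι ι 𝕜}
    (hA : A.IsHermitian) (x : ℝ) :
    x ∈ Set.range hA.eigenvalues ↔ A.charpoly.IsRoot (x : 𝕜) := by
  rw [← hA.spectrum_real_eq_range_eigenvalues, ← spectrum.algebraMap_mem_iff 𝕜,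
    mem_spectrum_iff_isRoot_charpoly]

theorem IsHermitian.range_eigenvalues_eq_smul_of_eval_charpoly {A : Matrix ι ι 𝕜}
    {B : Matrix κ κ 𝕜} (hA : A.IsHermitian) (hB : B.IsHermitian) {t : ℝ} (ht : t ≠ 0)
    {c : 𝕜} (hc : c ≠ 0) {k : ℕ} (hk : k ≠ 0)
    (h : ∀ z, A.charpoly.eval z = c * B.charpoly.eval (z / t) ^ k) :
    Set.range hA.eigenvalues = t • Set.range hB.eigenvalues := by
  ext x
  rw [Set.mem_smul_set_iff_inv_smul_mem₀ ht, hA.mem_range_eigenvalues_iff_isRoot_charpoly,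
    hB.mem_range_eigenvalues_iff_isRoot_charpoly, Polynomial.IsRoot, Polynomial.IsRoot, h,
    mul_eq_zero, pow_eq_zero_iff hk, smul_eq_mul, inv_mul_eq_div, RCLike.ofReal_div]
  simp [hc]

end Hermitian

end Matrix

theorem sigmaMin_eq_sqrt_mul_of_eval_charpoly {N k : ℕ} {A : Matrix (Fin N) (Fin N) ℂ}
    {B : Matrix (Fin k) (Fin k) ℂ} {t : ℝ} (ht : 0 < t) {c : ℂ} (hc : c ≠ 0) {m : ℕ}
    (hm : m ≠ 0)
    (h : ∀ z, (Aᴴ * A).charpoly.eval z = c * (Bᴴ * B).charpoly.eval (z / t) ^ m) :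
    sigmaMin A = √t * sigmaMin B := by
  have hrange := (isHermitian_conjTranspose_mul_self A).range_eigenvalues_eq_smul_of_eval_charpoly
    (isHermitian_conjTranspose_mul_self B) ht.ne' hc hm h
  rw [sigmaMin, sigmaMin, iInf, iInf, hrange, Real.sInf_smul_of_nonneg ht.le, smul_eq_mul,
    Real.sqrt_mul ht.le]

theorem norm_eval_zero_charpoly_conjTranspose_mul_self {ι : Type*} [Fintype ι] [DecidableEq ι]
    (A : Matrix ι ι ℂ) : ‖(Aᴴ * A).charpoly.eval 0‖ = ‖A.det‖ ^ 2 := by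
  rw [Matrix.eval_charpoly, map_zero, zero_sub, Matrix.det_neg, norm_mul, norm_pow, norm_neg,
    norm_one, one_pow, one_mul, Matrix.det_mul, Matrix.det_conjTranspose, norm_mul, norm_star, sq]

theorem Real.rpow_one_div_eq_sqrt_mul_of_sq_eq {C c t : ℝ} (hC : 0 ≤ C) (hc : 0 ≤ c)
    (ht : 0 ≤ t) {k m : ℕ} (hk : k ≠ 0) (hm : m ≠ 0)
    (h : C ^ 2 = t ^ (k * m) * c ^ (2 * m)) :
    C ^ ((1 : ℝ) / (k * m : ℕ)) = √t * c ^ ((1 : ℝ) / k) := by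
  have hC_eq : C = √t ^ (k * m) * c ^ m := by
    refine (pow_left_inj₀ hC (by positivity) two_ne_zero).mp ?_
    rw [h, mul_pow, ← pow_mul, ← pow_mul, mul_comm (k * m) 2, pow_mul √t, Real.sq_sqrt ht,
      mul_comm m]
  have hkm : k * m ≠ 0 := mul_ne_zero hk hm
  rw [hC_eq, Real.mul_rpow (by positivity) (by positivity), one_div, Real.pow_rpow_inv_natCast
    (Real.sqrt_nonneg t) hkm, ← Real.rpow_natCast c m, ← Real.rpow_mul hc]
  congr 2
  push_cast
  field_simp

theorem norm_det_rpow_eq_sqrt_mul_of_eval_charpoly {N k m : ℕ} (hk : k ≠ 0) (hm : m ≠ 0)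
    (hN : N = k * m) {A : Matrix (Fin N) (Fin N) ℂ} {B : Matrix (Fin k) (Fin k) ℂ} {t : ℝ}
    (ht : 0 ≤ t)
    (h : ∀ z, (Aᴴ * A).charpoly.eval z = (t : ℂ) ^ N * (Bᴴ * B).charpoly.eval (z / t) ^ m) :
    ‖A.det‖ ^ ((1 : ℝ) / N) = √t * ‖B.det‖ ^ ((1 : ℝ) / k) := by
  subst hN
  have hsq := congrArg norm (h 0)
  rw [zero_div, norm_mul, norm_pow, norm_pow, norm_eval_zero_charpoly_conjTranspose_mul_self,
    norm_eval_zero_charpoly_conjTranspose_mul_self, Complex.norm_of_nonneg ht, ← pow_mul] at hsq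
  exact Real.rpow_one_div_eq_sqrt_mul_of_sq_eq (norm_nonneg _) (norm_nonneg _) ht hk hm hsq

theorem IsPrimitiveRoot.conjTranspose_mul_self_twistedDFT {p : ℕ} {ξ u : ℂ}
    (hξ : IsPrimitiveRoot ξ p) (hu : ‖u‖ = 1) :
    (Matrix.of fun r q : Fin p => (u * ξ ^ (q : ℕ)) ^ (r : ℕ))ᴴ *
      Matrix.of (fun r q : Fin p => (u * ξ ^ (q : ℕ)) ^ (r : ℕ)) = (p : ℂ) • 1 := by
  ext q q'
  have hstar : ∀ z : ℂ, ‖z‖ = 1 → star z * z = 1 := fun z hz => by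
    rw [Complex.star_def, Complex.conj_mul', hz]; simp
  have hξq : star (ξ ^ (q : ℕ)) * ξ ^ (q : ℕ) = 1 :=
    hstar _ (by rw [norm_pow, hξ.norm'_eq_one (Fin.pos q).ne', one_pow])
  set w := star (ξ ^ (q : ℕ)) * ξ ^ (q' : ℕ) with hw
  have hterm (r : Fin p) :
      star ((u * ξ ^ (q : ℕ)) ^ (r : ℕ)) * (u * ξ ^ (q' : ℕ)) ^ (r : ℕ) = w ^ (r : ℕ) := by
    rw [star_pow, ← mul_pow, star_mul', mul_mul_mul_comm, hstar u hu, one_mul]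
  have hw_pow : w ^ p = 1 := by
    rw [hw, mul_pow, ← star_pow, ← pow_mul, ← pow_mul, mul_comm (q : ℕ),
      mul_comm (q' : ℕ), pow_mul, pow_mul, hξ.pow_eq_one]
    simp
  have hw_one : w = 1 ↔ q = q' := by
    refine ⟨fun h => Fin.ext (hξ.pow_inj q.2 q'.2 ?_), fun h => by rw [hw, ← h, hξq]⟩
    calc ξ ^ (q : ℕ) = ξ ^ (q : ℕ) * w := by rw [h, mul_one]
      _ = (star (ξ ^ (q : ℕ)) * ξ ^ (q : ℕ)) * ξ ^ (q' : ℕ) := by rw [hw]; ring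
      _ = ξ ^ (q' : ℕ) := by rw [hξq, one_mul]
  simp only [Matrix.mul_apply, Matrix.conjTranspose_apply, Matrix.of_apply, hterm,
    Fin.sum_univ_eq_sum_range (w ^ ·), Matrix.smul_apply, Matrix.one_apply, smul_eq_mul]
  by_cases hqq : q = q'
  · simp [hqq, hw_one.mpr hqq]
  · rw [geom_sum_eq (mt hw_one.mp hqq), hw_pow]
    simp [hqq]

noncomputable def coprimeResidue (n : ℕ) (s : Fin n.totient) : ℕ :=
  ({a ∈ Finset.range n | n.Coprime a}.orderIsoOfFin rfl s : ℕ)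

theorem coprimeResidue_mem (n : ℕ) (s : Fin n.totient) :
    coprimeResidue n s ∈ {a ∈ Finset.range n | n.Coprime a} :=
  ({a ∈ Finset.range n | n.Coprime a}.orderIsoOfFin rfl s).2

theorem coprimeResidue_lt (n : ℕ) (s : Fin n.totient) : coprimeResidue n s < n :=
  Finset.mem_range.mp (Finset.mem_filter.mp (coprimeResidue_mem n s)).1

theorem coprime_coprimeResidue (n : ℕ) (s : Fin n.totient) : n.Coprime (coprimeResidue n s) :=
  (Finset.mem_filter.mp (coprimeResidue_mem n s)).2

theorem coprimeResidue_injective (n : ℕ) : Function.Injective (coprimeResidue n) :=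
  fun _ _ h => ({a ∈ Finset.range n | n.Coprime a}.orderIsoOfFin rfl).injective (Subtype.ext h)

theorem exists_equiv_coprimeResidue_mul_prime {n p : ℕ} (hp : p.Prime) (hpn : p ∣ n) :
    ∃ e : Fin (n * p).totient ≃ Fin n.totient × Fin p,
      ∀ t, coprimeResidue (n * p) t = coprimeResidue n (e t).1 + n * (e t).2 := by
  set S := {a ∈ Finset.range (n * p) | (n * p).Coprime a}
  let lift : Fin n.totient × Fin p → Fin (p * n) := fun sq =>
    finProdFinEquiv (sq.2, ⟨coprimeResidue n sq.1, coprimeResidue_lt n sq.1⟩)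
  have hlift_inj : Function.Injective lift := fun ⟨s, q⟩ ⟨s', q'⟩ h => by
    obtain ⟨hq, hs⟩ := Prod.ext_iff.mp (finProdFinEquiv.injective h)
    exact Prod.ext (coprimeResidue_injective n (Fin.val_eq_of_eq hs)) hq
  have hlift_mem : ∀ sq, (lift sq : ℕ) ∈ S := fun ⟨s, q⟩ => by
    have hcop : n.Coprime (coprimeResidue n s + n * q) :=
      (Nat.coprime_add_mul_left_right _ _ _).mpr (coprime_coprimeResidue n s)
    refine Finset.mem_filter.mpr ⟨Finset.mem_range.mpr (mul_comm p n ▸ (lift (s, q)).2), ?_⟩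
    exact Nat.coprime_mul_iff_left.mpr ⟨hcop, Nat.Coprime.coprime_dvd_left hpn hcop⟩
  let g : Fin n.totient × Fin p → S := fun sq => ⟨lift sq, hlift_mem sq⟩
  have hg : Function.Bijective g := by
    refine (Fintype.bijective_iff_injective_and_card g).mpr
      ⟨fun x y h => hlift_inj (Fin.ext (congrArg Subtype.val h)), ?_⟩
    simp only [Fintype.card_prod, Fintype.card_fin, Fintype.card_coe, S]
    rw [← Nat.totient, mul_comm n p, Nat.totient_mul_of_prime_of_dvd hp hpn, mul_comm]
  refine ⟨(S.orderIsoOfFin rfl).toEquiv.trans (Equiv.ofBijective g hg).symm, fun t => ?_⟩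
  exact (congrArg Subtype.val
    ((Equiv.ofBijective g hg).apply_symm_apply (S.orderIsoOfFin rfl t))).symm

theorem cycVdm_apply (n : ℕ) (i s : Fin n.totient) :
    cycVdm n i s =
      (Complex.exp (2 * Real.pi * Complex.I / n) ^ coprimeResidue n s) ^ (i : ℕ) := by
  rw [← Complex.exp_nat_mul]
  unfold cycVdm coprimeResidue
  ring_nf

theorem totient_mul_prime_of_dvd {n p : ℕ} (hp : p.Prime) (hpn : p ∣ n) :
    (n * p).totient = n.totient * p := by
  rw [mul_comm n p, Nat.totient_mul_of_prime_of_dvd hp hpn, mul_comm]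

noncomputable def cycLiftBlock (n p : ℕ) (s : Fin n.totient) : Matrix (Fin p) (Fin p) ℂ :=
  let ω := Complex.exp (2 * Real.pi * Complex.I / (n * p : ℕ))
  Matrix.of fun r q => (ω ^ coprimeResidue n s * (ω ^ n) ^ (q : ℕ)) ^ (r : ℕ)

noncomputable def cycLift (n p : ℕ) :
    Matrix (Fin n.totient × Fin p) (Fin n.totient × Fin p) ℂ :=
  (Matrix.blockDiagonal (cycLiftBlock n p)).submatrix Prod.swap Prod.swap

theorem conjTranspose_mul_self_cycLiftBlock {n p : ℕ} (hn : 0 < n) (hp : 0 < p)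
    (s : Fin n.totient) : (cycLiftBlock n p s)ᴴ * cycLiftBlock n p s = (p : ℂ) • 1 := by
  have hω := Complex.isPrimitiveRoot_exp (n * p) (Nat.mul_pos hn hp).ne'
  exact (hω.pow (by positivity) rfl).conjTranspose_mul_self_twistedDFT
    (by rw [norm_pow, hω.norm'_eq_one (by positivity), one_pow])

theorem conjTranspose_mul_self_cycLift {n p : ℕ} (hn : 0 < n) (hp : 0 < p) :
    (cycLift n p)ᴴ * cycLift n p = (p : ℂ) • 1 := by
  rw [cycLift, Matrix.conjTranspose_submatrix, ← Equiv.coe_prodComm, Matrix.submatrix_mul_equiv,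
    Matrix.blockDiagonal_conjTranspose, ← Matrix.blockDiagonal_mul]
  have hblocks : (fun s => (cycLiftBlock n p s)ᴴ * cycLiftBlock n p s) = (p : ℂ) • 1 :=
    funext (conjTranspose_mul_self_cycLiftBlock hn hp)
  rw [hblocks, Matrix.blockDiagonal_smul, Matrix.blockDiagonal_one, Matrix.submatrix_smul,
    Pi.smul_apply, Pi.smul_apply, Matrix.submatrix_one_equiv]

theorem pow_add_mul_pow_add_mul {M : Type*} [CommMonoid M] {ω : M} {n p : ℕ}
    (hω : ω ^ (n * p) = 1) (a q r m : ℕ) :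
    (ω ^ (a + n * q)) ^ (r + p * m) = ((ω ^ p) ^ a) ^ m * (ω ^ a * (ω ^ n) ^ q) ^ r := by
  have hp : (ω ^ (a + n * q)) ^ p = (ω ^ p) ^ a := by
    rw [← pow_mul, add_mul, pow_add, mul_right_comm, pow_mul ω (n * p), hω, one_pow, mul_one,
      mul_comm, pow_mul]
  rw [pow_add, pow_mul, hp, pow_add ω, pow_mul ω n, mul_comm]

theorem cycVdm_mul_prime_eq_submatrix {n p : ℕ} (hn : 0 < n) (hp : p.Prime) (hpn : p ∣ n) :
    ∃ ρ e : Fin (n * p).totient ≃ Fin n.totient × Fin p,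
      cycVdm (n * p) =
        (Matrix.blockDiagonal (fun _ : Fin p => cycVdm n) * cycLift n p).submatrix ρ e := by
  obtain ⟨e, he⟩ := exists_equiv_coprimeResidue_mul_prime hp hpn
  obtain ⟨ρ, hρ⟩ : ∃ ρ : Fin (n * p).totient ≃ Fin n.totient × Fin p,
      ∀ x, (ρ.symm x : ℕ) = x.2 + p * x.1 :=
    ⟨(finProdFinEquiv.trans (finCongr (totient_mul_prime_of_dvd hp hpn).symm)).symm,
      fun x => by simp⟩
  refine ⟨ρ, e, ?_⟩
  let ω := Complex.exp (2 * Real.pi * Complex.I / (n * p : ℕ))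
  have hω : ω ^ (n * p) = 1 :=
    (Complex.isPrimitiveRoot_exp (n * p) (Nat.mul_pos hn hp.pos).ne').pow_eq_one
  have hωp : ω ^ p = Complex.exp (2 * Real.pi * Complex.I / n) := by
    rw [← Complex.exp_nat_mul]
    congr 1
    have : (p : ℂ) ≠ 0 := by exact_mod_cast hp.ne_zero
    push_cast
    field_simp
  refine Matrix.ext fun i t => ?_
  obtain ⟨⟨m, r⟩, rfl⟩ := ρ.symm.surjective i
  obtain ⟨⟨s, q⟩, rfl⟩ := e.symm.surjective t
  rw [Matrix.submatrix_apply, Equiv.apply_symm_apply, Equiv.apply_symm_apply, cycLift,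
    Matrix.blockDiagonal_const_mul_submatrix_blockDiagonal_apply, cycVdm_apply, cycVdm_apply, he,
    hρ, Equiv.apply_symm_apply, ← hωp]
  exact pow_add_mul_pow_add_mul hω _ _ _ _

theorem eval_charpoly_gram_cycVdm_mul_prime {n p : ℕ} (hn : 0 < n) (hp : p.Prime) (hpn : p ∣ n)
    (z : ℂ) : ((cycVdm (n * p))ᴴ * cycVdm (n * p)).charpoly.eval z =
      (p : ℂ) ^ (n * p).totient * (((cycVdm n)ᴴ * cycVdm n).charpoly.eval (z / p)) ^ p := by
  obtain ⟨ρ, e, hfac⟩ := cycVdm_mul_prime_eq_submatrix hn hp hpn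
  set Y := Matrix.blockDiagonal fun _ : Fin p => cycVdm n
  set X := cycLift n p
  have hgram : (cycVdm (n * p))ᴴ * cycVdm (n * p) =
      Matrix.reindex e.symm e.symm (Xᴴ * (Yᴴ * Y) * X) := by
    rw [hfac, Matrix.conjTranspose_submatrix, Matrix.submatrix_mul_equiv, Matrix.conjTranspose_mul,
      Matrix.reindex_apply]
    simp only [Equiv.symm_symm, Matrix.mul_assoc]
  rw [hgram, Matrix.charpoly_reindex, Matrix.eval_charpoly_mul_mul_of_mul_eq_smul_one
    (by exact_mod_cast hp.ne_zero) (conjTranspose_mul_self_cycLift hn hp.pos),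
    Matrix.blockDiagonal_conjTranspose, ← Matrix.blockDiagonal_mul, Matrix.charpoly_blockDiagonal,
    Finset.prod_const, Finset.card_univ, Fintype.card_fin, Polynomial.eval_pow, Fintype.card_prod,
    Fintype.card_fin, Fintype.card_fin, totient_mul_prime_of_dvd hp hpn]

theorem SD_mul_prime {n p : ℕ} (hn : 1 ≤ n) (hp : p.Prime) (hpn : p ∣ n) :
    SD (n * p) = SD n := by
  have hgram : ∀ z : ℂ, ((cycVdm (n * p))ᴴ * cycVdm (n * p)).charpoly.eval z =
      ((p : ℝ) : ℂ) ^ (n * p).totient *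
        (((cycVdm n)ᴴ * cycVdm n).charpoly.eval (z / (p : ℝ))) ^ p := fun z => by
    simpa only [Complex.ofReal_natCast] using eval_charpoly_gram_cycVdm_mul_prime hn hp hpn z
  have hp_pos : (0 : ℝ) < p := Nat.cast_pos.mpr hp.pos
  rw [SD, SD, norm_det_rpow_eq_sqrt_mul_of_eval_charpoly (Nat.totient_pos.mpr hn).ne' hp.ne_zero
      (totient_mul_prime_of_dvd hp hpn) hp_pos.le hgram,
    sigmaMin_eq_sqrt_mul_of_eval_charpoly hp_pos (pow_ne_zero _ (by exact_mod_cast hp_pos.ne'))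
      hp.ne_zero hgram,
    mul_div_mul_left _ _ (Real.sqrt_pos.mpr hp_pos).ne']

theorem radical_mul_of_prime_dvd {k q : ℕ} (hk : k ≠ 0) (hq : q.Prime) (hqk : q ∣ k) :
    radical (k * q) = radical k := by
  have hq_mem : q ∈ k.primeFactors := Nat.mem_primeFactors.mpr ⟨hq, hqk, hk⟩
  rw [radical, radical, Nat.primeFactors_mul hk hq.ne_zero, hq.primeFactors,
    Finset.union_eq_left.mpr (Finset.singleton_subset_iff.mpr hq_mem)]

theorem SD_eq_SD_radical {m : ℕ} (hm : 1 ≤ m) : SD m = SD (radical m) := by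
  induction m using Nat.strong_induction_on with
  | _ m ih =>
  by_cases hsf : Squarefree m
  · rw [radical, Nat.prod_primeFactors_of_squarefree hsf]
  obtain ⟨q, hq, c, rfl⟩ : ∃ q, q.Prime ∧ q * q ∣ m := by
    simpa [Nat.squarefree_iff_prime_squarefree] using hsf
  have hk : 1 ≤ q * c := Nat.pos_of_mul_pos_left (a := q) (by rwa [← mul_assoc])
  have hm_eq : q * q * c = q * c * q := by ring
  rw [hm_eq, SD_mul_prime hk hq (dvd_mul_right q c),
    radical_mul_of_prime_dvd (by omega) hq (dvd_mul_right q c)]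
  exact ih _ (hm_eq ▸ lt_mul_of_one_lt_right hk hq.one_lt) hk

/-- For `n ≥ 1` and a prime `p ∣ n`, `SD(Φ_{np}) = SD(Φ_n)`; consequently
`SD(Φ_m) = SD(Φ_{rad m})` for all `m ≥ 1`. -/
theorem spectralDistortion_mul_prime_and_radical (n p : ℕ) (hn : 1 ≤ n)
    (hp : p.Prime) (hpn : p ∣ n) :
    SD (n * p) = SD n ∧ ∀ m : ℕ, 1 ≤ m → SD m = SD (radical m) :=
  ⟨SD_mul_prime hn hp hpn, fun _ => SD_eq_SD_radical⟩
end

section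
/- Let h be a monic polynomial of degree m with roots α_1,...,α_m (with multiplicity) and let f(x) = h(x^k). Then the roots of f are ζ_k^s α_t^{1/k} for s = 0,...,k-1 and t = 1,...,m, and the Gram matrix of the Vandermonde matrix M_f satisfies (M†_f M_f)_{ij} = 0 whenever k ∤ (i-j), and (M†_f M_f)_{ij} = k Σ_t α_t^{i/k} conj(α_t)^{j/k} when k | (i-j). -/
open Finset Matrix Polynomial

/-- The Vandermonde matrix of `f(x) = h(x^k)`: rows indexed by powers
`0,…,mk-1`, columns by the roots `ζ_k^s · α_t^{1/k}` of `f`. -/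
noncomputable def vdmComp (m k : ℕ) (ζ : ℂ) (ρ : Fin m → ℂ) :
    Matrix (Fin (m * k)) (Fin k × Fin m) ℂ :=
  fun i st => (ζ ^ (st.1 : ℕ) * ρ st.2) ^ (i : ℕ)

open ComplexConjugate

/-!
Each factor `X^k - α t` of `f` splits as `∏ s, (X - ζ^s ρ t)`. Since `|ζ| = 1` we have
`conj ζ = ζ⁻¹`, so the `(i, j)` entry of the Gram matrix, a sum over the roots `ζ^s ρ t`,
factors as the geometric sum `∑_{s<k} (ζ^(i-j))^s`, which is `k` or `0` according as
`k ∣ i - j` or not, times `∑_t ρ_t^i conj(ρ_t)^j`.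
-/

theorem prod_X_sub_C_comp_X_pow {R ι : Type*} [CommRing R] [IsDomain R] [Fintype ι]
    {k : ℕ} (hk : 0 < k) {ζ : R} (hζ : IsPrimitiveRoot ζ k) {α ρ : ι → R}
    (hρ : ∀ t, ρ t ^ k = α t) :
    (∏ t, (X - C (α t))).comp (X ^ k) = ∏ s : Fin k, ∏ t, (X - C (ζ ^ (s : ℕ) * ρ t)) := by
  rw [Polynomial.prod_comp, prod_comm]
  refine prod_congr rfl fun t _ => ?_
  rw [sub_comp, X_comp, C_comp, X_pow_sub_C_eq_prod hζ hk (hρ t),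
    Fin.prod_univ_eq_prod_range (fun s => X - C (ζ ^ s * ρ t))]

theorem vdmComp_mul_conjTranspose_apply (m k : ℕ) (ζ : ℂ) (ρ : Fin m → ℂ)
    (i j : Fin (m * k)) :
    (vdmComp m k ζ ρ * (vdmComp m k ζ ρ)ᴴ) i j =
      (∑ s : Fin k, (ζ ^ (i : ℕ) * conj ζ ^ (j : ℕ)) ^ (s : ℕ)) *
        ∑ t, ρ t ^ (i : ℕ) * conj (ρ t) ^ (j : ℕ) := by
  rw [mul_apply, Fintype.sum_prod_type, sum_mul_sum]
  refine sum_congr rfl fun s _ => sum_congr rfl fun t _ => ?_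
  simp only [vdmComp, conjTranspose_apply, RCLike.star_def, map_pow, map_mul]
  ring

theorem IsPrimitiveRoot.pow_mul_conj_pow {ζ : ℂ} {k : ℕ} (hζ : IsPrimitiveRoot ζ k)
    (hk : k ≠ 0) (a b : ℕ) : ζ ^ a * conj ζ ^ b = ζ ^ ((a : ℤ) - b) := by
  rw [← Complex.inv_eq_conj (Complex.norm_eq_one_of_pow_eq_one hζ.pow_eq_one hk),
    zpow_sub₀ (hζ.ne_zero hk), zpow_natCast, zpow_natCast, div_eq_mul_inv, inv_pow]

theorem IsPrimitiveRoot.sum_pow_zpow {K : Type*} [Field K] {ζ : K} {k : ℕ}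
    (hζ : IsPrimitiveRoot ζ k) (n : ℤ) :
    ∑ s : Fin k, (ζ ^ n) ^ (s : ℕ) = if (k : ℤ) ∣ n then (k : K) else 0 := by
  rw [Fin.sum_univ_eq_sum_range (fun s => (ζ ^ n) ^ s)]
  split_ifs with hn
  · simp [(hζ.zpow_eq_one_iff_dvd n).mpr hn]
  · have hne : ζ ^ n - 1 ≠ 0 := sub_ne_zero.mpr (mt (hζ.zpow_eq_one_iff_dvd n).mp hn)
    have hpow : (ζ ^ n) ^ k = 1 := by
      rw [← zpow_natCast, ← _root_.zpow_mul, mul_comm, _root_.zpow_mul, zpow_natCast, hζ.pow_eq_one, _root_.one_zpow]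
    refine (mul_eq_zero.mp ?_).resolve_right hne
    rw [geom_sum_mul, hpow, sub_self]

theorem gram_of_comp_pow_general (m k : ℕ) (hk : 0 < k)
    (α ρ : Fin m → ℂ) (hρ : ∀ t, ρ t ^ k = α t)
    (ζ : ℂ) (hζ : IsPrimitiveRoot ζ k)
    (h f : Polynomial ℂ) (hh : h = ∏ t, (X - C (α t))) (hf : f = h.comp (X ^ k)) :
    f = ∏ s : Fin k, ∏ t : Fin m, (X - C (ζ ^ (s : ℕ) * ρ t)) ∧
      ∀ i j : Fin (m * k),
        (¬ (k : ℤ) ∣ ((i : ℤ) - (j : ℤ)) →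
          (vdmComp m k ζ ρ * (vdmComp m k ζ ρ)ᴴ) i j = 0) ∧
        ((k : ℤ) ∣ ((i : ℤ) - (j : ℤ)) →
          (vdmComp m k ζ ρ * (vdmComp m k ζ ρ)ᴴ) i j =
            (k : ℂ) * ∑ t, ρ t ^ (i : ℕ) * (starRingEnd ℂ) (ρ t) ^ (j : ℕ)) := by
  refine ⟨by rw [hf, hh, prod_X_sub_C_comp_X_pow hk hζ hρ], fun i j => ?_⟩
  rw [vdmComp_mul_conjTranspose_apply, hζ.pow_mul_conj_pow hk.ne', hζ.sum_pow_zpow]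
  exact ⟨fun hndvd => by rw [if_neg hndvd, zero_mul], fun hdvd => by rw [if_pos hdvd]⟩

/-- Let `h` be monic of degree `m` with roots `α_1,…,α_m` (with multiplicity) and
`f(x) = h(x^k)`.  Then the roots of `f` are `ζ_k^s α_t^{1/k}` (`ρ t` a fixed `k`-th
root of `α t`), and the Gram matrix of the Vandermonde matrix `M_f` satisfies
`(M†M)_{ij} = 0` when `k ∤ i-j` and `(M†M)_{ij} = k Σ_t α_t^{i/k} conj(α_t)^{j/k}`
when `k ∣ i-j`. -/
theorem gram_of_comp_pow (m k : ℕ) (hm : 0 < m) (hk : 0 < k)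
    (α ρ : Fin m → ℂ) (hρ : ∀ t, ρ t ^ k = α t)
    (ζ : ℂ) (hζ : IsPrimitiveRoot ζ k)
    (h f : Polynomial ℂ) (hh : h = ∏ t, (X - C (α t))) (hf : f = h.comp (X ^ k)) :
    f = ∏ s : Fin k, ∏ t : Fin m, (X - C (ζ ^ (s : ℕ) * ρ t)) ∧
      ∀ i j : Fin (m * k),
        (¬ (k : ℤ) ∣ ((i : ℤ) - (j : ℤ)) →
          (vdmComp m k ζ ρ * (vdmComp m k ζ ρ)ᴴ) i j = 0) ∧
        ((k : ℤ) ∣ ((i : ℤ) - (j : ℤ)) →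
          (vdmComp m k ζ ρ * (vdmComp m k ζ ρ)ᴴ) i j =
            (k : ℂ) * ∑ t, ρ t ^ (i : ℕ) * (starRingEnd ℂ) (ρ t) ^ (j : ℕ)) :=
  gram_of_comp_pow_general m k hk α ρ hρ ζ hζ h f hh hf
end

section
/- (Hong–Pan lower bound, row version) For an invertible n×n complex matrix A, σ_min(A) ≥ ((n-1)/n)^{(n-1)/2} · |det A| · r_min(A)/∏_{i=1}^n r_i(A), where r_i(A) is the L² norm of the i-th row and r_min is the smallest of these. -/
/-! Write `A = D B` with `D = diag(r₁, …, rₙ)` and `B` having unit rows. Then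
`σ_min(A) ≥ r_min σ_min(B)` and `|det A| = (∏ rᵢ) |det B|`. The eigenvalues of `BᴴB` are
nonnegative, sum to `‖B‖_F² = n` and multiply to `|det B|²`; the smallest is `σ_min(B)²`, and
AM–GM on the other `n - 1` gives `|det B|² ≤ σ_min(B)² (n / (n - 1))^(n - 1)`. -/

open Finset Matrix

/-- The `L²` norm of the `i`-th row of a complex matrix. -/
noncomputable def rowNorm {n : ℕ} (A : Matrix (Fin n) (Fin n) ℂ) (i : Fin n) : ℝ :=
  Real.sqrt (∑ j, ‖A i j‖ ^ 2)

theorem Real.prod_mul_card_pow_le_sum_pow {ι : Type*} (s : Finset ι) (f : ι → ℝ)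
    (hf : ∀ i ∈ s, 0 ≤ f i) : (∏ i ∈ s, f i) * (#s : ℝ) ^ #s ≤ (∑ i ∈ s, f i) ^ #s := by
  rcases s.eq_empty_or_nonempty with rfl | hs
  · simp
  have hcard : (0 : ℝ) < #s := by exact_mod_cast hs.card_pos
  have amgm := Real.geom_mean_le_arith_mean s (fun _ ↦ 1) f (by simp) (by simpa using hcard) hf
  simp only [Real.rpow_one, sum_const, nsmul_eq_mul, mul_one, one_mul] at amgm
  calc (∏ i ∈ s, f i) * (#s : ℝ) ^ #s
      = ((∏ i ∈ s, f i) ^ (#s : ℝ)⁻¹) ^ #s * (#s : ℝ) ^ #s := by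
        rw [Real.rpow_inv_natCast_pow (prod_nonneg hf) hs.card_pos.ne']
    _ ≤ ((∑ i ∈ s, f i) / #s) ^ #s * (#s : ℝ) ^ #s := by
        gcongr
        exact Real.rpow_nonneg (prod_nonneg hf) _
    _ = (∑ i ∈ s, f i) ^ #s := by rw [div_pow, div_mul_cancel₀ _ (by positivity)]

theorem Real.prod_mul_card_pred_pow_le {ι : Type*} [Fintype ι] (x : ι → ℝ) (hx : ∀ i, 0 ≤ x i)
    (j : ι) : (∏ i, x i) * ((Fintype.card ι - 1 : ℕ) : ℝ) ^ (Fintype.card ι - 1) ≤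
      x j * (∑ i, x i) ^ (Fintype.card ι - 1) := by
  classical
  have hcard : #(univ.erase j) = Fintype.card ι - 1 := by
    rw [card_erase_of_mem (mem_univ j), card_univ]
  rw [← mul_prod_erase univ x (mem_univ j), mul_assoc, ← hcard]
  gcongr
  · exact hx j
  calc (∏ i ∈ univ.erase j, x i) * (#(univ.erase j) : ℝ) ^ #(univ.erase j)
      ≤ (∑ i ∈ univ.erase j, x i) ^ #(univ.erase j) :=
        Real.prod_mul_card_pow_le_sum_pow _ x fun i _ ↦ hx i
    _ ≤ (∑ i, x i) ^ #(univ.erase j) :=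
        pow_le_pow_left₀ (sum_nonneg fun i _ ↦ hx i)
          (sum_le_sum_of_subset_of_nonneg (erase_subset j univ) fun i _ _ ↦ hx i) _

namespace Matrix

variable {𝕜 : Type*} [RCLike 𝕜] {n : Type*} [Fintype n]

theorem re_star_dotProduct_self (v : n → 𝕜) : RCLike.re (star v ⬝ᵥ v) = ∑ k, ‖v k‖ ^ 2 := by
  simp only [dotProduct, Pi.star_apply, RCLike.star_def, RCLike.conj_mul, map_sum,
    RCLike.re_ofReal_pow]

theorem re_star_dotProduct_conjTranspose_mul_self_mulVec (A : Matrix n n 𝕜) (v : n → 𝕜) :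
    RCLike.re (star v ⬝ᵥ ((Aᴴ * A) *ᵥ v)) = ∑ k, ‖(A *ᵥ v) k‖ ^ 2 := by
  rw [← mulVec_mulVec, dotProduct_mulVec, ← star_mulVec, re_star_dotProduct_self]

open scoped MatrixOrder in
theorem IsHermitian.mul_re_star_dotProduct_le [DecidableEq n] {M : Matrix n n 𝕜}
    (hM : M.IsHermitian) {c : ℝ} (hc : ∀ i, c ≤ hM.eigenvalues i) (v : n → 𝕜) :
    c * RCLike.re (star v ⬝ᵥ v) ≤ RCLike.re (star v ⬝ᵥ (M *ᵥ v)) := by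
  have hcM : algebraMap ℝ _ c ≤ M := by
    rw [algebraMap_le_iff_le_spectrum hM.isSelfAdjoint, hM.spectrum_real_eq_range_eigenvalues]
    rintro _ ⟨i, rfl⟩
    exact hc i
  simpa only [Algebra.algebraMap_eq_smul_one, sub_mulVec, smul_mulVec, one_mulVec,
    dotProduct_sub, dotProduct_smul, map_sub, RCLike.smul_re, sub_nonneg] using
    (le_iff.mp hcM).re_dotProduct_nonneg v

variable [DecidableEq n]

theorem prod_eigenvalues_conjTranspose_mul_self (B : Matrix n n 𝕜) :
    ∏ i, (isHermitian_conjTranspose_mul_self B).eigenvalues i = ‖B.det‖ ^ 2 := by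
  have h := (isHermitian_conjTranspose_mul_self B).det_eq_prod_eigenvalues
  rw [det_mul, det_conjTranspose, RCLike.star_def, RCLike.conj_mul] at h
  exact_mod_cast h.symm

theorem sum_eigenvalues_conjTranspose_mul_self (B : Matrix n n 𝕜) :
    ∑ i, (isHermitian_conjTranspose_mul_self B).eigenvalues i = ∑ i, ∑ j, ‖B i j‖ ^ 2 := by
  have h := (isHermitian_conjTranspose_mul_self B).trace_eq_sum_eigenvalues
  simp only [trace, diag_apply, mul_apply, conjTranspose_apply, RCLike.star_def,
    RCLike.conj_mul] at h
  rw [sum_comm] at h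
  exact_mod_cast h.symm

end Matrix

section SigmaMin

variable {n : ℕ}

theorem sigmaMin_nonneg (A : Matrix (Fin n) (Fin n) ℂ) : 0 ≤ sigmaMin A :=
  Real.sqrt_nonneg _

theorem sigmaMin_sq (A : Matrix (Fin n) (Fin n) ℂ) :
    sigmaMin A ^ 2 = ⨅ i, (isHermitian_conjTranspose_mul_self A).eigenvalues i :=
  Real.sq_sqrt (Real.iInf_nonneg (eigenvalues_conjTranspose_mul_self_nonneg A))

theorem exists_eigenvalues_eq_sigmaMin_sq (hn : 0 < n) (A : Matrix (Fin n) (Fin n) ℂ) :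
    ∃ i, (isHermitian_conjTranspose_mul_self A).eigenvalues i = sigmaMin A ^ 2 := by
  have : Nonempty (Fin n) := ⟨⟨0, hn⟩⟩
  rw [sigmaMin_sq]
  exact exists_eq_ciInf_of_finite

theorem sigmaMin_sq_mul_le (A : Matrix (Fin n) (Fin n) ℂ) (v : Fin n → ℂ) :
    sigmaMin A ^ 2 * ∑ k, ‖v k‖ ^ 2 ≤ ∑ k, ‖(A *ᵥ v) k‖ ^ 2 := by
  rw [← re_star_dotProduct_self, ← re_star_dotProduct_conjTranspose_mul_self_mulVec, sigmaMin_sq]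
  exact (isHermitian_conjTranspose_mul_self A).mul_re_star_dotProduct_le
    (fun i ↦ ciInf_le (Finite.bddBelow_range _) i) v

theorem le_sigmaMin_of_forall (hn : 0 < n) {A : Matrix (Fin n) (Fin n) ℂ} {c : ℝ} (hc : 0 ≤ c)
    (h : ∀ v : Fin n → ℂ, c ^ 2 * ∑ k, ‖v k‖ ^ 2 ≤ ∑ k, ‖(A *ᵥ v) k‖ ^ 2) : c ≤ sigmaMin A := by
  have hA := isHermitian_conjTranspose_mul_self A
  obtain ⟨i, hi⟩ := exists_eigenvalues_eq_sigmaMin_sq hn A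
  have hunit : ∑ k, ‖hA.eigenvectorBasis i k‖ ^ 2 = 1 := by
    rw [← EuclideanSpace.norm_sq_eq, hA.eigenvectorBasis.orthonormal.1 i, one_pow]
  have hc2 : c ^ 2 ≤ sigmaMin A ^ 2 := by
    simpa [hunit, ← hi, hA.eigenvalues_eq i, re_star_dotProduct_conjTranspose_mul_self_mulVec]
      using h (hA.eigenvectorBasis i)
  exact (pow_le_pow_iff_left₀ hc (sigmaMin_nonneg A) two_ne_zero).mp hc2

theorem sigmaMin_diagonal_mul (hn : 0 < n) (d : Fin n → ℂ) (B : Matrix (Fin n) (Fin n) ℂ) :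
    (⨅ i, ‖d i‖) * sigmaMin B ≤ sigmaMin (diagonal d * B) := by
  have hm : 0 ≤ ⨅ i, ‖d i‖ := Real.iInf_nonneg fun i ↦ norm_nonneg _
  have hd : ∀ k, (⨅ i, ‖d i‖) ≤ ‖d k‖ := ciInf_le (Finite.bddBelow_range _)
  refine le_sigmaMin_of_forall hn (mul_nonneg hm (sigmaMin_nonneg B)) fun v ↦ ?_
  calc ((⨅ i, ‖d i‖) * sigmaMin B) ^ 2 * ∑ k, ‖v k‖ ^ 2
      = (⨅ i, ‖d i‖) ^ 2 * (sigmaMin B ^ 2 * ∑ k, ‖v k‖ ^ 2) := by ring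
    _ ≤ (⨅ i, ‖d i‖) ^ 2 * ∑ k, ‖(B *ᵥ v) k‖ ^ 2 := by gcongr; exact sigmaMin_sq_mul_le B v
    _ ≤ ∑ k, ‖d k‖ ^ 2 * ‖(B *ᵥ v) k‖ ^ 2 := by
        rw [mul_sum]
        gcongr with k
        exact hd k
    _ = ∑ k, ‖((diagonal d * B) *ᵥ v) k‖ ^ 2 := by
        simp only [← mulVec_mulVec, mulVec_diagonal, Complex.norm_mul, mul_pow]

theorem norm_det_sq_mul_le (hn : 0 < n) (B : Matrix (Fin n) (Fin n) ℂ) :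
    ‖B.det‖ ^ 2 * ((n - 1 : ℕ) : ℝ) ^ (n - 1) ≤
      sigmaMin B ^ 2 * (∑ i, ∑ j, ‖B i j‖ ^ 2) ^ (n - 1) := by
  obtain ⟨i, hi⟩ := exists_eigenvalues_eq_sigmaMin_sq hn B
  rw [← prod_eigenvalues_conjTranspose_mul_self, ← sum_eigenvalues_conjTranspose_mul_self, ← hi]
  simpa using Real.prod_mul_card_pred_pow_le _ (eigenvalues_conjTranspose_mul_self_nonneg B) i

theorem rpow_mul_norm_det_le_sigmaMin (hn : 0 < n) {B : Matrix (Fin n) (Fin n) ℂ}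
    (hB : ∀ i, ∑ j, ‖B i j‖ ^ 2 = 1) :
    (((n : ℝ) - 1) / n) ^ (((n : ℝ) - 1) / 2) * ‖B.det‖ ≤ sigmaMin B := by
  have key := norm_det_sq_mul_le hn B
  simp only [hB, sum_const, card_univ, Fintype.card_fin, nsmul_eq_mul, mul_one] at key
  have hq : ((((n - 1 : ℕ) : ℝ) / n) ^ (((n - 1 : ℕ) : ℝ) / 2)) ^ 2 =
      ((n - 1 : ℕ) : ℝ) ^ (n - 1) / (n : ℝ) ^ (n - 1) := by
    rw [← Real.rpow_natCast, ← Real.rpow_mul (by positivity), Nat.cast_ofNat,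
      div_mul_cancel₀ _ two_ne_zero, Real.rpow_natCast, div_pow]
  rw [← Nat.cast_pred hn, ← pow_le_pow_iff_left₀ (by positivity) (sigmaMin_nonneg B) two_ne_zero,
    mul_pow, hq, div_mul_eq_mul_div, div_le_iff₀ (by positivity)]
  linarith

end SigmaMin

section RowNorm

variable {n : ℕ}

theorem rowNorm_nonneg (A : Matrix (Fin n) (Fin n) ℂ) (i : Fin n) : 0 ≤ rowNorm A i :=
  Real.sqrt_nonneg _

theorem rowNorm_sq (A : Matrix (Fin n) (Fin n) ℂ) (i : Fin n) :
    rowNorm A i ^ 2 = ∑ j, ‖A i j‖ ^ 2 :=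
  Real.sq_sqrt (sum_nonneg fun j _ ↦ by positivity)

theorem rowNorm_ne_zero {A : Matrix (Fin n) (Fin n) ℂ} (hA : A.det ≠ 0) (i : Fin n) :
    rowNorm A i ≠ 0 := by
  intro hi
  refine hA (det_eq_zero_of_row_eq_zero i fun j ↦ ?_)
  have hrow : ∑ j, ‖A i j‖ ^ 2 = 0 := by rw [← rowNorm_sq, hi, sq, zero_mul]
  simpa using (sum_eq_zero_iff_of_nonneg fun j _ ↦ by positivity).mp hrow j (mem_univ j)

theorem exists_eq_diagonal_rowNorm_mul {A : Matrix (Fin n) (Fin n) ℂ}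
    (hA : ∀ i, rowNorm A i ≠ 0) :
    ∃ B : Matrix (Fin n) (Fin n) ℂ, (∀ i, ∑ j, ‖B i j‖ ^ 2 = 1) ∧
      A = diagonal (fun i ↦ (rowNorm A i : ℂ)) * B := by
  refine ⟨diagonal (fun i ↦ (rowNorm A i : ℂ)⁻¹) * A, fun i ↦ ?_, ?_⟩
  · simp only [diagonal_mul, norm_mul, norm_inv, Complex.norm_real, Real.norm_eq_abs,
      abs_of_nonneg (rowNorm_nonneg A i), mul_pow, inv_pow, ← mul_sum, ← rowNorm_sq]
    exact inv_mul_cancel₀ (pow_ne_zero 2 (hA i))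
  · rw [← mul_assoc, diagonal_mul_diagonal]
    simp [hA]

end RowNorm

/-- Hong–Pan lower bound (row version): for an invertible `n×n` complex matrix `A`,
`σ_min(A) ≥ ((n-1)/n)^((n-1)/2) · |det A| · r_min(A) / ∏ᵢ rᵢ(A)`. -/
theorem hong_pan_lower_bound (n : ℕ) (hn : 0 < n)
    (A : Matrix (Fin n) (Fin n) ℂ) (hA : IsUnit A.det) :
    sigmaMin A ≥ (((n : ℝ) - 1) / (n : ℝ)) ^ (((n : ℝ) - 1) / 2) *
      ‖A.det‖ * (⨅ i, rowNorm A i) / ∏ i, rowNorm A i := by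
  have hr := rowNorm_ne_zero hA.ne_zero
  obtain ⟨B, hB, hAB⟩ := exists_eq_diagonal_rowNorm_mul hr
  have hnorm : ∀ i, ‖(rowNorm A i : ℂ)‖ = rowNorm A i := fun i ↦ by
    rw [Complex.norm_real, Real.norm_eq_abs, abs_of_nonneg (rowNorm_nonneg A i)]
  have hdet : ‖A.det‖ = (∏ i, rowNorm A i) * ‖B.det‖ := by
    conv_lhs => rw [hAB]
    rw [det_mul, det_diagonal, norm_mul, norm_prod]
    simp only [hnorm]
  calc _ = (⨅ i, ‖(rowNorm A i : ℂ)‖) * ((((n : ℝ) - 1) / n) ^ (((n : ℝ) - 1) / 2) * ‖B.det‖) := by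
        rw [hdet]
        simp only [hnorm]
        field_simp [prod_ne_zero_iff.mpr fun i _ ↦ hr i]
    _ ≤ (⨅ i, ‖(rowNorm A i : ℂ)‖) * sigmaMin B := by
        gcongr
        · exact Real.iInf_nonneg fun i ↦ norm_nonneg _
        · exact rpow_mul_norm_det_le_sigmaMin hn hB
    _ ≤ sigmaMin A := by
        conv_rhs => rw [hAB]
        exact sigmaMin_diagonal_mul hn _ B
end
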